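/- arXiv:1805.04210 — 6 statements merged into one kernel-verified Lean document; each statement's English description precedes it below -/
import Mathlib

section
/- Let m ≥ 1 and let L₁, …, L_m be positive real numbers. Let E₁ ≤ E₂ ≤ … be the increasing enumeration, counted with multiplicity, of the multiset of values {(2πj/Lᵢ)² : 1 ≤ i ≤ m, j ∈ ℕ, j ≥ 1} (equivalently, Eₙ is the smallest real number λ such that the total count Σᵢ #{j ≥ 1 : (2πj/Lᵢ)² ≤ λ} is at least n). Then the gap-to-midgap ratio of the m-th gap satisfies G_m := 2(E_{m+1} − E_m)/(E_m + E_{m+1}) ≤ 6/5. -/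
open Real

private lemma card_eq_ncard (P : ℕ → Prop) :
    Nat.card {j : ℕ // P j} = ({j | P j} : Set ℕ).ncard := rfl

private def Sset (Li lam : ℝ) : Set ℕ := {j | 1 ≤ j ∧ (2 * π * j / Li) ^ 2 ≤ lam}

private lemma Sset_finite {Li : ℝ} (hLi : 0 < Li) (lam : ℝ) : (Sset Li lam).Finite := by
  apply (Set.finite_Iic ⌈lam * Li ^ 2⌉₊).subset
  rintro j ⟨hj1, hj2⟩
  have hj1' : (1 : ℝ) ≤ (j : ℝ) := by exact_mod_cast hj1
  have hπ : (3 : ℝ) < π := pi_gt_three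
  have h2 : (2 * π * j) ^ 2 ≤ lam * Li ^ 2 := by
    rw [div_pow] at hj2
    exact (div_le_iff₀ (by positivity)).mp hj2
  have h4 : (1 : ℝ) ≤ (2 * π) ^ 2 := by nlinarith
  have hle : (j : ℝ) ≤ lam * Li ^ 2 := by
    calc (j : ℝ) ≤ (j : ℝ) ^ 2 := by nlinarith [sq_nonneg ((j : ℝ) - 1)]
      _ = 1 * (j : ℝ) ^ 2 := by ring
      _ ≤ (2 * π) ^ 2 * (j : ℝ) ^ 2 := mul_le_mul_of_nonneg_right h4 (sq_nonneg _)
      _ = (2 * π * j) ^ 2 := by ring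
      _ ≤ lam * Li ^ 2 := h2
  have : (j : ℝ) ≤ (⌈lam * Li ^ 2⌉₊ : ℝ) := hle.trans (Nat.le_ceil _)
  exact Set.mem_Iic.mpr (by exact_mod_cast this)

private lemma Sset_mono {Li lam lam' : ℝ} (h : lam ≤ lam') : Sset Li lam ⊆ Sset Li lam' :=
  fun _ hj => ⟨hj.1, hj.2.trans h⟩

private lemma lam_nonneg {Li lam : ℝ} (h : (Sset Li lam).Nonempty) : 0 ≤ lam := by
  obtain ⟨j, _, hj2⟩ := h
  exact le_trans (sq_nonneg _) hj2

/-- If some eigenvalue of the interval lies below `lam`, then the first eigenvalue does. -/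
private lemma one_mem {Li lam : ℝ} (hLi : 0 < Li) (hne : (Sset Li lam).Nonempty) :
    (2 * π * (1 : ℝ) / Li) ^ 2 ≤ lam := by
  obtain ⟨j, hj1, hj2⟩ := hne
  have hj1' : (1 : ℝ) ≤ (j : ℝ) := by exact_mod_cast hj1
  have hπ : (0 : ℝ) < π := pi_pos
  refine le_trans ?_ hj2
  have hbase : 2 * π * (1 : ℝ) / Li ≤ 2 * π * (j : ℝ) / Li := by
    have h : 2 * π * (1 : ℝ) ≤ 2 * π * (j : ℝ) := by nlinarith
    exact div_le_div_of_nonneg_right h hLi.le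
  exact pow_le_pow_left₀ (by positivity) hbase 2

private lemma step {Li lam : ℝ} (hLi : 0 < Li) (hne : (Sset Li lam).Nonempty) :
    (Sset Li lam).ncard + 1 ≤ (Sset Li (4 * lam)).ncard := by
  have h0 : 0 ≤ lam := lam_nonneg hne
  have hπ : (0 : ℝ) < π := pi_pos
  have hinj : Function.Injective (fun j : ℕ => 2 * j) := fun a b h => by
    dsimp only at h; omega
  have hsub : insert 1 ((fun j : ℕ => 2 * j) '' Sset Li lam) ⊆ Sset Li (4 * lam) := by
    rintro k hk
    rcases Set.mem_insert_iff.mp hk with rfl | ⟨j, ⟨hj1, hj2⟩, rfl⟩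
    · refine ⟨le_refl 1, ?_⟩
      push_cast
      have := one_mem hLi hne
      linarith
    · dsimp only
      refine ⟨by omega, ?_⟩
      have he : (2 * π * ((2 * j : ℕ) : ℝ) / Li) ^ 2 = 4 * (2 * π * (j : ℝ) / Li) ^ 2 := by
        push_cast; ring
      rw [he]
      linarith
  have hmem : (1 : ℕ) ∉ (fun j : ℕ => 2 * j) '' Sset Li lam := by
    rintro ⟨j, ⟨hj1, _⟩, hj⟩
    dsimp only at hj
    omega
  have hfin : ((fun j : ℕ => 2 * j) '' Sset Li lam).Finite := (Sset_finite hLi lam).image _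
  calc (Sset Li lam).ncard + 1
      = ((fun j : ℕ => 2 * j) '' Sset Li lam).ncard + 1 := by
        rw [Set.ncard_image_of_injective _ hinj]
    _ = (insert 1 ((fun j : ℕ => 2 * j) '' Sset Li lam)).ncard :=
        (Set.ncard_insert_of_notMem hmem hfin).symm
    _ ≤ (Sset Li (4 * lam)).ncard := Set.ncard_le_ncard hsub (Sset_finite hLi _)

/-- High-contrast (`V₊ = ∞`) upper bound in one dimension: if `E n` is the increasing
enumeration (with multiplicity) of the Dirichlet eigenvalues `(2πj/Lᵢ)²` of `m` intervals of
lengths `L i > 0`, then the gap-to-midgap ratio of the `m`-th gap is at most `6/5`. -/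
theorem gap_to_midgap_le_six_fifths
    (m : ℕ) (hm : 1 ≤ m) (L : Fin m → ℝ) (hL : ∀ i, 0 < L i)
    (E : ℕ → ℝ)
    (hE : ∀ n : ℕ, E n = sInf {lam : ℝ |
      n ≤ ∑ i : Fin m, Nat.card {j : ℕ // 1 ≤ j ∧ (2 * π * j / L i) ^ 2 ≤ lam}}) :
    2 * (E (m + 1) - E m) / (E m + E (m + 1)) ≤ 6 / 5 := by
  haveI : Nonempty (Fin m) := ⟨⟨0, hm⟩⟩
  have hπ : (0 : ℝ) < π := pi_pos
  have hE' : ∀ n : ℕ, E n = sInf {lam : ℝ | n ≤ ∑ i : Fin m, (Sset (L i) lam).ncard} := by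
    intro n
    rw [hE n]
    congr 1

  set T : ℕ → Set ℝ := fun n => {lam : ℝ | n ≤ ∑ i : Fin m, (Sset (L i) lam).ncard} with hT
  have hmemT : ∀ n lam, lam ∈ T n ↔ n ≤ ∑ i : Fin m, (Sset (L i) lam).ncard := by
    intro n lam; rfl
  -- nonemptiness of T n
  have hTne : ∀ n : ℕ, (T n).Nonempty := by
    intro n
    set i₀ : Fin m := ⟨0, hm⟩
    refine ⟨(2 * π * n / L i₀) ^ 2, (hmemT _ _).mpr ?_⟩
    have hsub : Set.Icc 1 n ⊆ Sset (L i₀) ((2 * π * n / L i₀) ^ 2) := by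
      rintro j ⟨hj1, hj2⟩
      refine ⟨hj1, ?_⟩
      have hjn : (j : ℝ) ≤ (n : ℝ) := by exact_mod_cast hj2
      have hbase : 2 * π * (j : ℝ) / L i₀ ≤ 2 * π * (n : ℝ) / L i₀ := by
        have := hL i₀
        gcongr
      exact pow_le_pow_left₀ (div_nonneg (by positivity) (hL i₀).le) hbase 2
    calc n = (Set.Icc 1 n).ncard := by
          rw [← Finset.coe_Icc, Set.ncard_coe_finset, Nat.card_Icc]; omega
      _ ≤ (Sset (L i₀) ((2 * π * n / L i₀) ^ 2)).ncard :=
          Set.ncard_le_ncard hsub (Sset_finite (hL i₀) _)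
      _ ≤ ∑ i : Fin m, (Sset (L i) ((2 * π * n / L i₀) ^ 2)).ncard :=
          Finset.single_le_sum (f := fun i => (Sset (L i) ((2 * π * n / L i₀) ^ 2)).ncard)
            (fun i _ => Nat.zero_le _) (Finset.mem_univ i₀)
  -- positive uniform lower bound
  set B : ℝ := Finset.univ.sup' Finset.univ_nonempty L with hB
  have hBpos : 0 < B := lt_of_lt_of_le (hL ⟨0, hm⟩) (Finset.le_sup' L (Finset.mem_univ _))
  set c : ℝ := (2 * π / B) ^ 2 with hc
  have hcpos : 0 < c := pow_pos (div_pos (by positivity) hBpos) 2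
  have hlb : ∀ n : ℕ, 1 ≤ n → ∀ lam ∈ T n, c ≤ lam := by
    intro n hn lam hlam
    have hsum : n ≤ ∑ i : Fin m, (Sset (L i) lam).ncard := (hmemT _ _).mp hlam
    have hnz : (∑ i : Fin m, (Sset (L i) lam).ncard) ≠ 0 := by omega
    obtain ⟨i, _, hi⟩ := Finset.exists_ne_zero_of_sum_ne_zero hnz
    have hne : (Sset (L i) lam).Nonempty := Set.nonempty_of_ncard_ne_zero hi
    have h1 := one_mem (hL i) hne
    have hLB : L i ≤ B := Finset.le_sup' L (Finset.mem_univ i)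
    refine le_trans ?_ h1
    rw [hc]
    apply pow_le_pow_left₀ (by positivity)
    rw [mul_one]
    have := hL i
    gcongr
  have hbdd : ∀ n : ℕ, 1 ≤ n → BddBelow (T n) := fun n hn => ⟨c, fun lam h => hlb n hn lam h⟩
  -- key doubling step
  have hkey : ∀ lam ∈ T m, 4 * lam ∈ T (m + 1) := by
    intro lam hlam
    have hsum : m ≤ ∑ i : Fin m, (Sset (L i) lam).ncard := (hmemT _ _).mp hlam
    have hnz : (∑ i : Fin m, (Sset (L i) lam).ncard) ≠ 0 := by omega
    obtain ⟨i₀, _, hi₀⟩ := Finset.exists_ne_zero_of_sum_ne_zero hnz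
    have hne : (Sset (L i₀) lam).Nonempty := Set.nonempty_of_ncard_ne_zero hi₀
    have h0 : 0 ≤ lam := lam_nonneg hne
    have hlt : (∑ i : Fin m, (Sset (L i) lam).ncard)
        < ∑ i : Fin m, (Sset (L i) (4 * lam)).ncard := by
      apply Finset.sum_lt_sum
      · intro i _
        exact Set.ncard_le_ncard (Sset_mono (by linarith)) (Sset_finite (hL i) _)
      · exact ⟨i₀, Finset.mem_univ _,
          lt_of_lt_of_le (Nat.lt_succ_self _) (step (hL i₀) hne)⟩
    exact (hmemT _ _).mpr (by omega)
  -- assemble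
  have hEm_def : E m = sInf (T m) := hE' m
  have hEm1_def : E (m + 1) = sInf (T (m + 1)) := hE' (m + 1)
  have hEm_pos : c ≤ E m := by
    rw [hEm_def]
    exact le_csInf (hTne m) (hlb m hm)
  have hmono : E m ≤ E (m + 1) := by
    rw [hEm_def, hEm1_def]
    refine csInf_le_csInf (hbdd m hm) (hTne (m + 1)) (fun lam h => ?_)
    exact (hmemT _ _).mpr (le_trans (by omega) ((hmemT _ _).mp h))
  have h4 : E (m + 1) ≤ 4 * E m := by
    rw [hEm_def, hEm1_def]
    have hstep : ∀ lam ∈ T m, sInf (T (m + 1)) ≤ 4 * lam := fun lam h =>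
      csInf_le (hbdd (m + 1) (by omega)) (hkey lam h)
    have h' : sInf (T (m + 1)) / 4 ≤ sInf (T m) :=
      le_csInf (hTne m) (fun lam h => by linarith [hstep lam h])
    linarith
  have ha : 0 < E m := lt_of_lt_of_le hcpos hEm_pos
  have hb : 0 < E m + E (m + 1) := by linarith
  rw [div_le_div_iff₀ hb (by norm_num)]
  nlinarith
end

section
/- Let V : ℝ → ℝ, let α < β be real numbers, and let x_α < x_β. Suppose ψ_α, ψ_β : ℝ → ℝ solve the Schrödinger equation with potential V and eigenvalues α and β respectively on [x_α, x_β], with continuous first derivatives there. Assume ψ_α(x_α) = 0, ψ_α'(x_α) > 0, ψ_β(x_α) > 0, and ψ_α(x) > 0 and ψ_β(x) > 0 for all x ∈ (x_α, x_β). Then the ratio x ↦ ψ_α(x)/ψ_β(x) is strictly increasing on (x_α, x_β); that is, for all x < y in (x_α, x_β) one has ψ_α(x)/ψ_β(x) < ψ_α(y)/ψ_β(y). -/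
/-!
The Wronskian `W = ψβ ψα' - ψα ψβ'` satisfies `W' = (β - α) ψα ψβ`, which is positive where both
eigenfunctions are. Since `W(x_α) = ψβ(x_α) ψα'(x_α) > 0`, the Wronskian is positive on the whole
interval, and it is the numerator of `(ψα / ψβ)' = W / ψβ²`.
-/

open Set

def wronskian (φ φ' ψ ψ' : ℝ → ℝ) (x : ℝ) : ℝ := φ x * ψ' x - ψ x * φ' x

section Wronskian

variable {V φ φ' φ'' ψ ψ' ψ'' : ℝ → ℝ} {E₁ E₂ x : ℝ}

theorem hasDerivAt_wronskian
    (hψ : HasDerivAt ψ (ψ' x) x) (hψ' : HasDerivAt ψ' (ψ'' x) x)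
    (hφ : HasDerivAt φ (φ' x) x) (hφ' : HasDerivAt φ' (φ'' x) x)
    (hψeq : -ψ'' x + V x * ψ x = E₁ * ψ x) (hφeq : -φ'' x + V x * φ x = E₂ * φ x) :
    HasDerivAt (wronskian φ φ' ψ ψ') ((E₂ - E₁) * (ψ x * φ x)) x :=
  ((hφ.mul hψ').sub (hψ.mul hφ')).congr_deriv (by linear_combination ψ x * hφeq - φ x * hψeq)

theorem hasDerivAt_div_eq_wronskian_div_sq
    (hψ : HasDerivAt ψ (ψ' x) x) (hφ : HasDerivAt φ (φ' x) x) (hφx : φ x ≠ 0) :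
    HasDerivAt (fun y => ψ y / φ y) (wronskian φ φ' ψ ψ' x / φ x ^ 2) x :=
  (hψ.fun_div hφ hφx).congr_deriv (by rw [wronskian]; ring)

end Wronskian

theorem strictMonoOn_of_hasDerivAt_pos {s : Set ℝ} (hs : Convex ℝ s) {f f' : ℝ → ℝ}
    (hf : ∀ x ∈ s, HasDerivAt f (f' x) x) (hf' : ∀ x ∈ interior s, 0 < f' x) :
    StrictMonoOn f s :=
  strictMonoOn_of_deriv_pos hs (HasDerivAt.continuousOn hf) fun x hx => by
    rw [(hf x (interior_subset hx)).deriv]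
    exact hf' x hx

theorem strictMonoOn_div_of_wronskian_pos {s : Set ℝ} (hs : Convex ℝ s) {φ φ' ψ ψ' : ℝ → ℝ}
    (hψ : ∀ x ∈ s, HasDerivAt ψ (ψ' x) x) (hφ : ∀ x ∈ s, HasDerivAt φ (φ' x) x)
    (hφpos : ∀ x ∈ s, 0 < φ x) (hW : ∀ x ∈ s, 0 < wronskian φ φ' ψ ψ' x) :
    StrictMonoOn (fun x => ψ x / φ x) s := by
  refine strictMonoOn_of_hasDerivAt_pos hs
    (fun x hx => hasDerivAt_div_eq_wronskian_div_sq (hψ x hx) (hφ x hx) (hφpos x hx).ne')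
    fun x hx => ?_
  have hx' := interior_subset hx
  exact div_pos (hW x hx') (pow_pos (hφpos x hx') 2)

theorem ratio_strictly_increasing_general
    (V : ℝ → ℝ) (α β : ℝ) (hαβ : α < β) (xα xβ : ℝ)
    (ψα ψα' ψα'' ψβ ψβ' ψβ'' : ℝ → ℝ)
    (hψα1 : ∀ x ∈ Set.Icc xα xβ, HasDerivAt ψα (ψα' x) x)
    (hψα2 : ∀ x ∈ Set.Icc xα xβ, HasDerivAt ψα' (ψα'' x) x)
    (hψβ1 : ∀ x ∈ Set.Icc xα xβ, HasDerivAt ψβ (ψβ' x) x)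
    (hψβ2 : ∀ x ∈ Set.Icc xα xβ, HasDerivAt ψβ' (ψβ'' x) x)
    (heqα : ∀ x ∈ Set.Icc xα xβ, -ψα'' x + V x * ψα x = α * ψα x)
    (heqβ : ∀ x ∈ Set.Icc xα xβ, -ψβ'' x + V x * ψβ x = β * ψβ x)
    (hzα : ψα xα = 0) (hdα : 0 < ψα' xα) (hβ0 : 0 < ψβ xα)
    (hposα : ∀ x ∈ Set.Ioo xα xβ, 0 < ψα x)
    (hposβ : ∀ x ∈ Set.Ioo xα xβ, 0 < ψβ x) :
    ∀ x ∈ Set.Ioo xα xβ, ∀ y ∈ Set.Ioo xα xβ, x < y →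
      ψα x / ψβ x < ψα y / ψβ y := by
  set W := wronskian ψβ ψβ' ψα ψα'
  have hW_mono : StrictMonoOn W (Icc xα xβ) := by
    refine strictMonoOn_of_hasDerivAt_pos (convex_Icc xα xβ)
      (fun x hx => hasDerivAt_wronskian (hψα1 x hx) (hψα2 x hx) (hψβ1 x hx) (hψβ2 x hx)
        (heqα x hx) (heqβ x hx)) fun x hx => ?_
    rw [interior_Icc] at hx
    exact mul_pos (sub_pos.2 hαβ) (mul_pos (hposα x hx) (hposβ x hx))
  have hW_left : 0 < W xα := by
    simp only [W, wronskian, hzα, zero_mul, sub_zero]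
    exact mul_pos hβ0 hdα
  have hW_pos : ∀ x ∈ Ioo xα xβ, 0 < W x := fun x hx =>
    hW_left.trans (hW_mono (left_mem_Icc.2 (hx.1.trans hx.2).le) (Ioo_subset_Icc_self hx) hx.1)
  intro x hx y hy hxy
  exact strictMonoOn_div_of_wronskian_pos (convex_Ioo xα xβ)
    (fun t ht => hψα1 t (Ioo_subset_Icc_self ht)) (fun t ht => hψβ1 t (Ioo_subset_Icc_self ht))
    hposβ hW_pos hx hy hxy

/-- Monotonicity of the ratio of gap-edge eigenfunctions: with `ψα, ψβ` solving the
Schrödinger equation at energies `α < β` on `[x_α, x_β]`, `ψα(x_α) = 0`, `ψα'(x_α) > 0`,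
`ψβ(x_α) > 0` and both positive inside, the ratio `ψα/ψβ` is strictly increasing on
`(x_α, x_β)`. -/
theorem ratio_strictly_increasing
    (V : ℝ → ℝ) (α β : ℝ) (hαβ : α < β) (xα xβ : ℝ) (hx : xα < xβ)
    (ψα ψα' ψα'' ψβ ψβ' ψβ'' : ℝ → ℝ)
    (hψα1 : ∀ x ∈ Set.Icc xα xβ, HasDerivAt ψα (ψα' x) x)
    (hψα2 : ∀ x ∈ Set.Icc xα xβ, HasDerivAt ψα' (ψα'' x) x)
    (hψαc : ContinuousOn ψα' (Set.Icc xα xβ))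
    (hψβ1 : ∀ x ∈ Set.Icc xα xβ, HasDerivAt ψβ (ψβ' x) x)
    (hψβ2 : ∀ x ∈ Set.Icc xα xβ, HasDerivAt ψβ' (ψβ'' x) x)
    (hψβc : ContinuousOn ψβ' (Set.Icc xα xβ))
    (heqα : ∀ x ∈ Set.Icc xα xβ, -ψα'' x + V x * ψα x = α * ψα x)
    (heqβ : ∀ x ∈ Set.Icc xα xβ, -ψβ'' x + V x * ψβ x = β * ψβ x)
    (hzα : ψα xα = 0) (hdα : 0 < ψα' xα) (hβ0 : 0 < ψβ xα)
    (hposα : ∀ x ∈ Set.Ioo xα xβ, 0 < ψα x)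
    (hposβ : ∀ x ∈ Set.Ioo xα xβ, 0 < ψβ x) :
    ∀ x ∈ Set.Ioo xα xβ, ∀ y ∈ Set.Ioo xα xβ, x < y →
      ψα x / ψβ x < ψα y / ψβ y :=
  ratio_strictly_increasing_general V α β hαβ xα xβ ψα ψα' ψα'' ψβ ψβ' ψβ'' hψα1 hψα2 hψβ1 hψβ2 heqα
    heqβ hzα hdα hβ0 hposα hposβ
end

section
/- Let n, q, m, μ be positive natural numbers, V₊ > 0, and α, β > 0 real. For each j ∈ {1,…,q}, let A_j be an m×m positive semidefinite complex matrix, B_j a μ×μ positive semidefinite complex matrix, and let U_{α,j} be an n×m complex matrix and U_{β,j} an n×μ complex matrix with U_{α,j}* U_{α,j} = I_m and U_{β,j}* U_{β,j} = I_μ. Let f₊, f₋ ∈ ℝⁿ have nonnegative entries and let V ∈ ℝⁿ satisfy 0 ≤ V_ℓ ≤ V₊ for all ℓ. Assume: (i) Σ_j tr(A_j) = 4β/(α+β)² and Σ_j tr(B_j) = 4α/(α+β)²; (ii) for each ℓ ∈ {1,…,n}, the ℓ-th diagonal entry of Σ_j (U_{β,j} B_j U_{β,j}* − U_{α,j} A_j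 U_{α,j}*) equals f₊ℓ − f₋ℓ; (iii) Σ_ℓ f₊ℓ (V₊ − V_ℓ) = 0 and Σ_ℓ f₋ℓ V_ℓ = 0. If α ≠ β, then there exists an index ℓ with V_ℓ = 0 or V_ℓ = V₊ (i.e., the potential is weakly bang-bang). -/
open Matrix ComplexOrder in
/-- A KKT point of the linear-fractional SDP for the gap-to-midgap problem with `α ≠ β`
is weakly bang-bang: some grid point attains one of the pointwise bounds on `V`. -/
theorem kkt_weakly_bang_bang
    (n q m μ : ℕ) (hn : 0 < n) (hq : 0 < q) (hm : 0 < m) (hμ : 0 < μ)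
    (Vp : ℝ) (hVp : 0 < Vp) (α β : ℝ) (hα : 0 < α) (hβ : 0 < β)
    (A : Fin q → Matrix (Fin m) (Fin m) ℂ)
    (B : Fin q → Matrix (Fin μ) (Fin μ) ℂ)
    (hA : ∀ j, (A j).PosSemidef) (hB : ∀ j, (B j).PosSemidef)
    (Uα : Fin q → Matrix (Fin n) (Fin m) ℂ)
    (Uβ : Fin q → Matrix (Fin n) (Fin μ) ℂ)
    (hUα : ∀ j, (Uα j)ᴴ * Uα j = 1)
    (hUβ : ∀ j, (Uβ j)ᴴ * Uβ j = 1)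
    (fp fm : Fin n → ℝ) (hfp : ∀ ℓ, 0 ≤ fp ℓ) (hfm : ∀ ℓ, 0 ≤ fm ℓ)
    (V : Fin n → ℝ) (hV : ∀ ℓ, 0 ≤ V ℓ ∧ V ℓ ≤ Vp)
    (hstatA : ∑ j, (A j).trace = ((4 * β / (α + β) ^ 2 : ℝ) : ℂ))
    (hstatB : ∑ j, (B j).trace = ((4 * α / (α + β) ^ 2 : ℝ) : ℂ))
    (hstatV : ∀ ℓ : Fin n,
      (∑ j, (Uβ j * B j * (Uβ j)ᴴ - Uα j * A j * (Uα j)ᴴ)) ℓ ℓ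
        = ((fp ℓ - fm ℓ : ℝ) : ℂ))
    (hcs1 : ∑ ℓ, fp ℓ * (Vp - V ℓ) = 0)
    (hcs2 : ∑ ℓ, fm ℓ * V ℓ = 0)
    (hαβ : α ≠ β) :
    ∃ ℓ : Fin n, V ℓ = 0 ∨ V ℓ = Vp := by
  by_contra h
  push_neg at h
  -- strict bounds
  have hstrict : ∀ ℓ, 0 < V ℓ ∧ V ℓ < Vp := fun ℓ => by
    obtain ⟨h0, h1⟩ := hV ℓ
    exact ⟨lt_of_le_of_ne h0 (Ne.symm (h ℓ).1), lt_of_le_of_ne h1 (h ℓ).2⟩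
  -- fp ≡ 0
  have hfp0 : ∀ ℓ, fp ℓ = 0 := by
    intro ℓ
    have hterm : ∀ i ∈ Finset.univ, 0 ≤ fp i * (Vp - V i) := fun i _ =>
      mul_nonneg (hfp i) (by linarith [(hstrict i).2])
    have := (Finset.sum_eq_zero_iff_of_nonneg hterm).mp hcs1 ℓ (Finset.mem_univ ℓ)
    have hpos : 0 < Vp - V ℓ := by linarith [(hstrict ℓ).2]
    exact (mul_eq_zero.mp this).resolve_right (ne_of_gt hpos)
  have hfm0 : ∀ ℓ, fm ℓ = 0 := by
    intro ℓ
    have hterm : ∀ i ∈ Finset.univ, 0 ≤ fm i * V i := fun i _ =>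
      mul_nonneg (hfm i) (hstrict i).1.le
    have := (Finset.sum_eq_zero_iff_of_nonneg hterm).mp hcs2 ℓ (Finset.mem_univ ℓ)
    exact (mul_eq_zero.mp this).resolve_right (ne_of_gt (hstrict ℓ).1)
  -- sum of diagonal entries
  have hdiag : ∀ ℓ : Fin n,
      (∑ j, (Uβ j * B j * (Uβ j)ᴴ - Uα j * A j * (Uα j)ᴴ)) ℓ ℓ = 0 := by
    intro ℓ
    rw [hstatV ℓ, hfp0 ℓ, hfm0 ℓ]
    norm_num
  have htr : (∑ j, (Uβ j * B j * (Uβ j)ᴴ - Uα j * A j * (Uα j)ᴴ)).trace = 0 := by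
    unfold Matrix.trace
    simp only [Matrix.diag_apply]
    exact Finset.sum_eq_zero fun ℓ _ => hdiag ℓ
  rw [Matrix.trace_sum] at htr
  have htr2 : ∀ j, (Uβ j * B j * (Uβ j)ᴴ - Uα j * A j * (Uα j)ᴴ).trace
      = (B j).trace - (A j).trace := by
    intro j
    rw [Matrix.trace_sub, Matrix.trace_mul_cycle (Uβ j) (B j) (Uβ j)ᴴ,
      Matrix.trace_mul_cycle (Uα j) (A j) (Uα j)ᴴ]
    rw [hUβ j, hUα j, Matrix.one_mul, Matrix.one_mul]
  simp only [htr2] at htr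
  rw [Finset.sum_sub_distrib, hstatA, hstatB, sub_eq_zero] at htr
  have : (4 * α / (α + β) ^ 2 : ℝ) = 4 * β / (α + β) ^ 2 := by exact_mod_cast htr
  have hne : ((α + β) ^ 2 : ℝ) ≠ 0 := by positivity
  apply hαβ
  field_simp at this
  linarith
end

section
/- Let n be a positive natural number, V₊ > 0, α, β > 0, and ψ_α, ψ_β ∈ ℝⁿ. Define V ∈ ℝⁿ by V_ℓ = V₊ if β ψ_αℓ² < α ψ_βℓ² and V_ℓ = 0 otherwise; define the scalars A = 4β/(α+β)² and B = 4α/(α+β)²; and define f₊, f₋ ∈ ℝⁿ by f₊ℓ = max(B ψ_βℓ² − A ψ_αℓ², 0) and f₋ℓ = max(A ψ_αℓ² − B ψ_βℓ², 0). Then this data satisfies the KKT conditions of the gap-optimization semidefinite program with q = 1 and one-dimensional subspaces: (i) A = 4β/(α+β)² ≥ 0 and B = 4α/(α+β)² ≥ 0 and f₊ℓ, f₋ℓ ≥ 0 for all ℓ; (ii) for each ℓ, B ψ_βℓ² − A ψ_αℓ² = f₊ℓ − f₋ℓ; (iii) Σ_ℓ f₊ℓ (V₊ − V_ℓ) = 0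 and Σ_ℓ f₋ℓ V_ℓ = 0; and (iv) 0 ≤ V_ℓ ≤ V₊ for all ℓ. -/
/-!
Write `g = B ψβ² − A ψα²`. Then `f₊ = g⁺` and `f₋ = g⁻`, which gives nonnegativity and
stationarity `g = f₊ − f₋` at once. Since `A` and `B` are the same nonnegative factor
`4 / (α + β)²` times `β` and `α`, the sign of `g` is that of `α ψβ² − β ψα²`, so `f₊`
vanishes off the set where `V = V₊` and `f₋` vanishes on it: complementary slackness holds
term by term.
-/

section BangBang

variable {g Vp : ℝ} {p : Prop} [Decidable p]

lemma posPart_mul_sub_ite_eq_zero (h : ¬p → g ≤ 0) : g⁺ * (Vp - if p then Vp else 0) = 0 := by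
  by_cases hp : p
  · simp [hp]
  · simp [hp, posPart_eq_zero.2 (h hp)]

lemma negPart_mul_ite_eq_zero (h : p → 0 ≤ g) : g⁻ * (if p then Vp else 0) = 0 := by
  by_cases hp : p
  · simp [hp, negPart_eq_zero.2 (h hp)]
  · simp [hp]

end BangBang

section DualGap

variable {α β a b : ℝ}

lemma dual_gap_eq (α β a b : ℝ) :
    4 * α / (α + β) ^ 2 * b - 4 * β / (α + β) ^ 2 * a = 4 / (α + β) ^ 2 * (α * b - β * a) := by
  ring

lemma dual_gap_nonpos (h : α * b ≤ β * a) :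
    4 * α / (α + β) ^ 2 * b - 4 * β / (α + β) ^ 2 * a ≤ 0 :=
  (dual_gap_eq α β a b).trans_le <| mul_nonpos_of_nonneg_of_nonpos (by positivity) (by linarith)

lemma dual_gap_nonneg (h : β * a ≤ α * b) :
    0 ≤ 4 * α / (α + β) ^ 2 * b - 4 * β / (α + β) ^ 2 * a :=
  (mul_nonneg (by positivity) (by linarith)).trans_eq (dual_gap_eq α β a b).symm

end DualGap

theorem rearrangement_satisfies_kkt_general
    (n : ℕ) (Vp : ℝ) (hVp : 0 < Vp)
    (α β : ℝ) (hα : 0 < α) (hβ : 0 < β)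
    (ψα ψβ : Fin n → ℝ)
    (V : Fin n → ℝ)
    (hV : ∀ ℓ, V ℓ = if β * ψα ℓ ^ 2 < α * ψβ ℓ ^ 2 then Vp else 0)
    (A B : ℝ) (hA : A = 4 * β / (α + β) ^ 2) (hB : B = 4 * α / (α + β) ^ 2)
    (fp fm : Fin n → ℝ)
    (hfp : ∀ ℓ, fp ℓ = max (B * ψβ ℓ ^ 2 - A * ψα ℓ ^ 2) 0)
    (hfm : ∀ ℓ, fm ℓ = max (A * ψα ℓ ^ 2 - B * ψβ ℓ ^ 2) 0) :
    (0 ≤ A ∧ 0 ≤ B ∧ ∀ ℓ, 0 ≤ fp ℓ ∧ 0 ≤ fm ℓ) ∧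
    (∀ ℓ, B * ψβ ℓ ^ 2 - A * ψα ℓ ^ 2 = fp ℓ - fm ℓ) ∧
    ((∑ ℓ, fp ℓ * (Vp - V ℓ) = 0) ∧ (∑ ℓ, fm ℓ * V ℓ = 0)) ∧
    (∀ ℓ, 0 ≤ V ℓ ∧ V ℓ ≤ Vp) := by
  subst hA hB
  set g := fun ℓ ↦ 4 * α / (α + β) ^ 2 * ψβ ℓ ^ 2 - 4 * β / (α + β) ^ 2 * ψα ℓ ^ 2
  have hfp' : ∀ ℓ, fp ℓ = (g ℓ)⁺ := fun ℓ ↦ (hfp ℓ).trans (posPart_def _).symm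
  have hfm' : ∀ ℓ, fm ℓ = (g ℓ)⁻ := fun ℓ ↦ by rw [hfm, negPart_def, neg_sub]
  refine ⟨⟨by positivity, by positivity, fun ℓ ↦ ?_⟩, fun ℓ ↦ ?_, ⟨?_, ?_⟩, fun ℓ ↦ ?_⟩
  · rw [hfp', hfm']
    exact ⟨posPart_nonneg _, negPart_nonneg _⟩
  · rw [hfp', hfm', posPart_sub_negPart]
  · refine Finset.sum_eq_zero fun ℓ _ ↦ ?_
    rw [hfp', hV]
    exact posPart_mul_sub_ite_eq_zero fun h ↦ dual_gap_nonpos (not_lt.1 h)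
  · refine Finset.sum_eq_zero fun ℓ _ ↦ ?_
    rw [hfm', hV]
    exact negPart_mul_ite_eq_zero fun h ↦ dual_gap_nonneg h.le
  · rw [hV]
    split_ifs <;> constructor <;> linarith

/-- The one-dimensional rearrangement step (set `V = V₊` exactly where `β ψα² < α ψβ²`)
together with the natural dual variables satisfies the KKT conditions of the
gap-optimization SDP with a single quasi-momentum and rank-one subspaces. -/
theorem rearrangement_satisfies_kkt
    (n : ℕ) (hn : 0 < n) (Vp : ℝ) (hVp : 0 < Vp)
    (α β : ℝ) (hα : 0 < α) (hβ : 0 < β)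
    (ψα ψβ : Fin n → ℝ)
    (V : Fin n → ℝ)
    (hV : ∀ ℓ, V ℓ = if β * ψα ℓ ^ 2 < α * ψβ ℓ ^ 2 then Vp else 0)
    (A B : ℝ) (hA : A = 4 * β / (α + β) ^ 2) (hB : B = 4 * α / (α + β) ^ 2)
    (fp fm : Fin n → ℝ)
    (hfp : ∀ ℓ, fp ℓ = max (B * ψβ ℓ ^ 2 - A * ψα ℓ ^ 2) 0)
    (hfm : ∀ ℓ, fm ℓ = max (A * ψα ℓ ^ 2 - B * ψβ ℓ ^ 2) 0) :
    (0 ≤ A ∧ 0 ≤ B ∧ ∀ ℓ, 0 ≤ fp ℓ ∧ 0 ≤ fm ℓ) ∧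
    (∀ ℓ, B * ψβ ℓ ^ 2 - A * ψα ℓ ^ 2 = fp ℓ - fm ℓ) ∧
    ((∑ ℓ, fp ℓ * (Vp - V ℓ) = 0) ∧ (∑ ℓ, fm ℓ * V ℓ = 0)) ∧
    (∀ ℓ, 0 ≤ V ℓ ∧ V ℓ ≤ Vp) :=
  rearrangement_satisfies_kkt_general n Vp hVp α β hα hβ ψα ψβ V hV A B hA hB fp fm hfp hfm
end

section
/- Let X > 0, 0 < b < X, a = X − b, V₊ > 0, and let 0 < E < V₊. Set Q = √(V₊ − E) and K = √E, and let k ∈ ℝ. Suppose ψ : ℝ → ℂ is continuously differentiable, not identically zero, satisfies the quasi-periodicity conditions ψ(x + X) = e^{ikX} ψ(x) and ψ'(x + X) = e^{ikX} ψ'(x) for all x ∈ ℝ, is twice differentiable on (0, b) with ψ''(x) = (V₊ − E) ψ(x) there, and is twice differentiable on (b, X) with ψ''(x) = −E ψ(x) there. Then ((Q² − K²)/(2QK)) · sinh(Qb) · sin(Ka) + cosh(Qb) · cos(Ka) = cos(Xk). -/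
/-!
On an interval where `ψ'' = m² ψ`, the combinations `ψ' ± m ψ` evolve by `e^{± m t}`, so the
Cauchy data `(ψ, ψ')` are carried across an interval of length `t` by the unimodular matrix
`[[cosh mt, sinh mt / m], [m sinh mt, cosh mt]]`, with `m = Q` on `(0, b)` and `m = i K` on
`(b, X)`. The Bloch condition makes `e^{ikX}` an eigenvalue of the monodromy `T₂ T₁` (the Cauchy
data at `0` cannot vanish, or `ψ` would vanish on a period and hence everywhere). Since
`det (T₂ T₁) = 1`, the characteristic polynomial gives `tr (T₂ T₁) = e^{ikX} + e^{-ikX} = 2 cos kX`,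
and `tr (T₂ T₁)` is twice the left-hand side of the dispersion relation.
-/

open Complex Matrix Set

theorem constant_of_hasDerivAt_Ioo_zero {E : Type*} [NormedAddCommGroup E] [NormedSpace ℝ E]
    [CompleteSpace E] {f : ℝ → E} {p q : ℝ} (hf : ContinuousOn f (Icc p q))
    (hderiv : ∀ x ∈ Ioo p q, HasDerivAt f 0 x) : ∀ x ∈ Icc p q, f x = f p := by
  intro x hx
  have h := intervalIntegral.integral_eq_sub_of_hasDerivAt_of_le hx.1
    (hf.mono (Icc_subset_Icc_right hx.2)) (fun y hy => hderiv y ⟨hy.1, hy.2.trans_le hx.2⟩)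
    intervalIntegrable_const
  rw [intervalIntegral.integral_zero] at h
  exact sub_eq_zero.1 h.symm

theorem eq_zero_of_eqOn_Ico_of_map_add_eq_mul {α G₀ : Type*} [AddCommGroup α] [LinearOrder α]
    [IsOrderedAddMonoid α] [Archimedean α] [MulZeroClass G₀] [NoZeroDivisors G₀]
    {f : α → G₀} {c : α} {L : G₀} (hc : 0 < c) (hL : L ≠ 0)
    (hf : ∀ x, f (x + c) = L * f x) (h0 : ∀ x ∈ Ico 0 c, f x = 0) : f = 0 := by
  have hper : Function.Periodic (fun x => f x = 0) c := fun x => by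
    simp only [hf, mul_eq_zero, hL, false_or]
  funext x
  obtain ⟨y, hy, hxy⟩ := hper.exists_mem_Ico₀ hc x
  exact hxy.mpr (h0 y hy)

/-- `(d/dt - m) (ψ' + m ψ) = ψ'' - m² ψ = 0`. -/
theorem hasDerivAt_exp_neg_mul_mul_add {ψ ψ' : ℝ → ℂ} {m : ℂ} {x : ℝ}
    (hd : HasDerivAt ψ (ψ' x) x) (hd' : HasDerivAt ψ' (m ^ 2 * ψ x) x) :
    HasDerivAt (fun t : ℝ => cexp (-(m * t)) * (ψ' t + m * ψ t)) 0 x := by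
  have hexp : HasDerivAt (fun t : ℝ => cexp (-(m * t))) (cexp (-(m * x)) * -m) x :=
    (((ofRealCLM.hasDerivAt (x := x)).const_mul m).neg.congr_deriv (by simp)).cexp
  refine (hexp.mul (hd'.add (hd.const_mul m))).congr_deriv ?_
  simp only [Pi.add_apply]
  ring

theorem add_mul_eq_exp_mul {ψ ψ' : ℝ → ℂ} {m : ℂ} {p q : ℝ}
    (hψ : ContinuousOn ψ (Icc p q)) (hψ' : ContinuousOn ψ' (Icc p q))
    (hd : ∀ x ∈ Ioo p q, HasDerivAt ψ (ψ' x) x)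
    (hd' : ∀ x ∈ Ioo p q, HasDerivAt ψ' (m ^ 2 * ψ x) x) :
    ∀ x ∈ Icc p q, ψ' x + m * ψ x = cexp (m * ↑(x - p)) * (ψ' p + m * ψ p) := by
  intro x hx
  have hcont : ContinuousOn (fun t : ℝ => cexp (-(m * t)) * (ψ' t + m * ψ t)) (Icc p q) := by
    fun_prop
  have h := constant_of_hasDerivAt_Ioo_zero hcont
    (fun y hy => hasDerivAt_exp_neg_mul_mul_add (hd y hy) (hd' y hy)) x hx
  have hinv : cexp (m * x) * cexp (-(m * x)) = 1 := by
    rw [← Complex.exp_add, add_neg_cancel, Complex.exp_zero]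
  have hsplit : cexp (m * ↑(x - p)) = cexp (m * x) * cexp (-(m * p)) := by
    rw [← Complex.exp_add]; push_cast; ring_nf
  rw [hsplit]
  linear_combination cexp (m * x) * h - (ψ' x + m * ψ x) * hinv

noncomputable def transferMatrix (m : ℂ) (t : ℝ) : Matrix (Fin 2) (Fin 2) ℂ :=
  !![cosh (m * t), sinh (m * t) / m; m * sinh (m * t), cosh (m * t)]

theorem transferMatrix_mulVec {ψ ψ' : ℝ → ℂ} {m : ℂ} {p q : ℝ} (hm : m ≠ 0)
    (hψ : ContinuousOn ψ (Icc p q)) (hψ' : ContinuousOn ψ' (Icc p q))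
    (hd : ∀ x ∈ Ioo p q, HasDerivAt ψ (ψ' x) x)
    (hd' : ∀ x ∈ Ioo p q, HasDerivAt ψ' (m ^ 2 * ψ x) x) :
    ∀ x ∈ Icc p q, transferMatrix m (x - p) *ᵥ ![ψ p, ψ' p] = ![ψ x, ψ' x] := by
  intro x hx
  have hplus := add_mul_eq_exp_mul hψ hψ' hd hd' x hx
  have hminus := add_mul_eq_exp_mul (m := -m) hψ hψ' hd (by simpa only [neg_sq] using hd') x hx
  simp only [neg_mul] at hminus
  have hch := two_cosh (m * ↑(x - p))
  have hsh := two_sinh (m * ↑(x - p))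
  simp only [transferMatrix, cons_mulVec, empty_mulVec, vec2_dotProduct']
  refine vec2_eq ?_ ?_
  · field_simp
    linear_combination (-1 / 2 : ℂ) * (hplus - hminus) + m * ψ p / 2 * hch + ψ' p / 2 * hsh
  · linear_combination (-1 / 2 : ℂ) * (hplus + hminus) + ψ' p / 2 * hch + m * ψ p / 2 * hsh

theorem det_transferMatrix (m : ℂ) (t : ℝ) : (transferMatrix m t).det = 1 := by
  rw [transferMatrix, det_fin_two_of]
  rcases eq_or_ne m 0 with rfl | hm
  · simp
  · field_simp
    linear_combination cosh_sq_sub_sinh_sq (m * t)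

theorem trace_transferMatrix_mul (m n : ℂ) (s t : ℝ) :
    (transferMatrix n s * transferMatrix m t).trace
      = 2 * cosh (m * t) * cosh (n * s) + (m / n + n / m) * sinh (m * t) * sinh (n * s) := by
  simp only [transferMatrix, trace_fin_two, mul_apply, Fin.sum_univ_two, of_apply, cons_val',
    cons_val_zero, cons_val_one, empty_val', cons_val_fin_one]
  ring

theorem trace_transferMatrix_ofReal_mul_I_mul (Q K a b : ℝ) :
    (transferMatrix (K * I) a * transferMatrix Q b).trace
      = ↑(2 * Real.cosh (Q * b) * Real.cos (K * a)
          + (Q / K - K / Q) * Real.sinh (Q * b) * Real.sin (K * a)) := by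
  rw [trace_transferMatrix_mul, show (K : ℂ) * I * a = ↑(K * a) * I by push_cast; ring,
    cosh_mul_I, sinh_mul_I, div_mul_eq_div_div, div_I]
  push_cast
  linear_combination ((K : ℂ) / Q - Q / K) * sinh (Q * b) * sin (K * a) * I_sq

theorem sq_sub_trace_mul_add_det_eq_zero_of_mulVec_eq_smul {K : Type*} [Field K]
    {M : Matrix (Fin 2) (Fin 2) K} {v : Fin 2 → K} {L : K} (hv : v ≠ 0) (h : M *ᵥ v = L • v) :
    L ^ 2 - M.trace * L + M.det = 0 := by
  have hdet : (L • 1 - M).det = 0 := exists_mulVec_eq_zero_iff.1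
    ⟨v, hv, by rw [sub_mulVec, smul_mulVec, one_mulVec, h, sub_self]⟩
  rw [det_fin_two] at hdet
  simp only [Fin.isValue, Matrix.sub_apply, Matrix.smul_apply, one_apply_eq, smul_eq_mul,
    mul_one, ne_eq, zero_ne_one, not_false_eq_true, one_apply_ne, mul_zero, zero_sub,
    one_ne_zero] at hdet
  rw [trace_fin_two, det_fin_two]
  linear_combination hdet

theorem eq_two_cos_of_exp_mul_I_sq_sub_mul_add_one {θ : ℝ} {t : ℂ}
    (h : cexp (θ * I) ^ 2 - t * cexp (θ * I) + 1 = 0) : t = 2 * cos θ := by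
  have hinv : cexp (-θ * I) * cexp (θ * I) = 1 := by
    rw [← Complex.exp_add, neg_mul, neg_add_cancel, Complex.exp_zero]
  rw [two_cos]
  refine mul_right_cancel₀ (Complex.exp_ne_zero (θ * I)) ?_
  linear_combination -h - hinv

theorem cauchyData_ne_zero {ψ ψ' : ℝ → ℂ} {T₁ T₂ : ℝ → Matrix (Fin 2) (Fin 2) ℂ} {b X : ℝ}
    {L : ℂ} (hb : 0 ≤ b) (hX : 0 < X) (hL : L ≠ 0) (hne : ∃ x, ψ x ≠ 0)
    (hqp : ∀ x, ψ (x + X) = L * ψ x)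
    (h₁ : ∀ x ∈ Icc 0 b, T₁ x *ᵥ ![ψ 0, ψ' 0] = ![ψ x, ψ' x])
    (h₂ : ∀ x ∈ Icc b X, T₂ x *ᵥ ![ψ b, ψ' b] = ![ψ x, ψ' x]) :
    ![ψ 0, ψ' 0] ≠ 0 := by
  intro h0
  have hb0 : ![ψ b, ψ' b] = 0 := by rw [← h₁ b ⟨hb, le_rfl⟩, h0, mulVec_zero]
  obtain ⟨x₀, hx₀⟩ := hne
  refine hx₀ (congrFun (eq_zero_of_eqOn_Ico_of_map_add_eq_mul hX hL hqp fun x hx => ?_) x₀)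
  rcases le_total x b with hxb | hbx
  · simpa [h0] using congrFun (h₁ x ⟨hx.1, hxb⟩).symm 0
  · simpa [hb0] using congrFun (h₂ x ⟨hbx, hx.2.le⟩).symm 0

theorem kronig_penney_dispersion_general
    (X b Vp E k : ℝ) (hX : 0 < X) (hb : 0 < b) (hbX : b < X)
    (a : ℝ) (ha : a = X - b) (hE : 0 < E) (hEV : E < Vp)
    (Q K : ℝ) (hQ : Q = Real.sqrt (Vp - E)) (hK : K = Real.sqrt E)
    (ψ ψ' : ℝ → ℂ)
    (hder : ∀ x, HasDerivAt ψ (ψ' x) x) (hcont : Continuous ψ')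
    (hne : ∃ x, ψ x ≠ 0)
    (hqp : ∀ x : ℝ, ψ (x + X) = Complex.exp (Complex.I * k * X) * ψ x)
    (hqp' : ∀ x : ℝ, ψ' (x + X) = Complex.exp (Complex.I * k * X) * ψ' x)
    (hode1 : ∀ x ∈ Set.Ioo 0 b, HasDerivAt ψ' (((Vp - E : ℝ) : ℂ) * ψ x) x)
    (hode2 : ∀ x ∈ Set.Ioo b X, HasDerivAt ψ' ((-(E : ℝ) : ℂ) * ψ x) x) :
    (Q ^ 2 - K ^ 2) / (2 * Q * K) * Real.sinh (Q * b) * Real.sin (K * a)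
      + Real.cosh (Q * b) * Real.cos (K * a) = Real.cos (X * k) := by
  have hQ0 : 0 < Q := hQ ▸ Real.sqrt_pos.2 (sub_pos.2 hEV)
  have hK0 : 0 < K := hK ▸ Real.sqrt_pos.2 hE
  have hQne : (Q : ℂ) ≠ 0 := ofReal_ne_zero.2 hQ0.ne'
  have hKne : (K : ℂ) * I ≠ 0 := mul_ne_zero (ofReal_ne_zero.2 hK0.ne') I_ne_zero
  have hQsq : ((Vp - E : ℝ) : ℂ) = (Q : ℂ) ^ 2 := by
    rw [hQ, ← ofReal_pow, Real.sq_sqrt (sub_pos.2 hEV).le]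
  have hKsq : -(E : ℂ) = ((K : ℂ) * I) ^ 2 := by
    rw [mul_pow, I_sq, hK, ← ofReal_pow, Real.sq_sqrt hE.le]; ring
  have hψ : Continuous ψ := continuous_iff_continuousAt.2 fun x => (hder x).continuousAt
  have h₁ := transferMatrix_mulVec (p := 0) (q := b) hQne hψ.continuousOn hcont.continuousOn
    (fun x _ => hder x) (fun x hx => hQsq ▸ hode1 x hx)
  have h₂ := transferMatrix_mulVec (p := b) (q := X) hKne hψ.continuousOn hcont.continuousOn
    (fun x _ => hder x) (fun x hx => hKsq ▸ hode2 x hx)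
  simp only [sub_zero] at h₁
  rw [show I * k * X = ↑(X * k) * I by push_cast; ring] at hqp hqp'
  have hmonodromy : (transferMatrix (K * I) a * transferMatrix Q b) *ᵥ ![ψ 0, ψ' 0]
      = cexp (↑(X * k) * I) • ![ψ 0, ψ' 0] := by
    rw [← mulVec_mulVec, h₁ b ⟨hb.le, le_rfl⟩, ha, h₂ X ⟨hbX.le, le_rfl⟩, smul_vec2]
    exact vec2_eq (by simpa using hqp 0) (by simpa using hqp' 0)
  have hchar := sq_sub_trace_mul_add_det_eq_zero_of_mulVec_eq_smul
    (cauchyData_ne_zero hb.le hX (Complex.exp_ne_zero _) hne hqp h₁ h₂) hmonodromy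
  rw [det_mul, det_transferMatrix, det_transferMatrix, mul_one,
    trace_transferMatrix_ofReal_mul_I_mul] at hchar
  have htrace := eq_two_cos_of_exp_mul_I_sq_sub_mul_add_one hchar
  rw [← ofReal_cos, ← ofReal_ofNat, ← ofReal_mul, ofReal_inj] at htrace
  rw [show (Q ^ 2 - K ^ 2) / (2 * Q * K) = (Q / K - K / Q) / 2 by field_simp]
  linear_combination htrace / 2

/-- Kronig–Penney dispersion relation: a nonzero `C¹` Bloch–Floquet solution with
quasi-momentum `k` of the Schrödinger equation with the `X`-periodic piecewise constant
potential (`V₊` on `(0,b)`, `0` on `(b,X)`) at energy `0 < E < V₊` forces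
`((Q²−K²)/(2QK)) sinh(Qb) sin(Ka) + cosh(Qb) cos(Ka) = cos(Xk)` with `Q = √(V₊−E)`,
`K = √E`, `a = X − b`. -/
theorem kronig_penney_dispersion
    (X b Vp E k : ℝ) (hX : 0 < X) (hb : 0 < b) (hbX : b < X)
    (a : ℝ) (ha : a = X - b) (hVp : 0 < Vp) (hE : 0 < E) (hEV : E < Vp)
    (Q K : ℝ) (hQ : Q = Real.sqrt (Vp - E)) (hK : K = Real.sqrt E)
    (ψ ψ' : ℝ → ℂ)
    (hder : ∀ x, HasDerivAt ψ (ψ' x) x) (hcont : Continuous ψ')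
    (hne : ∃ x, ψ x ≠ 0)
    (hqp : ∀ x : ℝ, ψ (x + X) = Complex.exp (Complex.I * k * X) * ψ x)
    (hqp' : ∀ x : ℝ, ψ' (x + X) = Complex.exp (Complex.I * k * X) * ψ' x)
    (hode1 : ∀ x ∈ Set.Ioo 0 b, HasDerivAt ψ' (((Vp - E : ℝ) : ℂ) * ψ x) x)
    (hode2 : ∀ x ∈ Set.Ioo b X, HasDerivAt ψ' ((-(E : ℝ) : ℂ) * ψ x) x) :
    (Q ^ 2 - K ^ 2) / (2 * Q * K) * Real.sinh (Q * b) * Real.sin (K * a)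
      + Real.cosh (Q * b) * Real.cos (K * a) = Real.cos (X * k) :=
  kronig_penney_dispersion_general X b Vp E k hX hb hbX a ha hE hEV Q K hQ hK ψ ψ' hder hcont hne
    hqp hqp' hode1 hode2
end

section
/- Let E₂ = EuclideanSpace ℝ (Fin 2), let R : E₂ → E₂ be a linear isometry equivalence, let V : E₂ → ℝ satisfy V(R z) = V(z) for all z ∈ E₂, let k ∈ E₂, E ∈ ℝ, and let p : E₂ → ℂ be twice continuously differentiable. Suppose that for all x ∈ E₂, −Δp(x) − 2i·(Dp(x))(k) + ‖k‖² p(x) + V(x) p(x) = E p(x), where Δp denotes the Laplacian of p (the sum of second derivatives along an orthonormal basis) and Dp(x) is the Fréchet derivative of p at x. Then q := p ∘ R⁻¹ satisfies, for all x ∈ E₂, −Δq(x) − 2i·(Dq(x))(R k) + ‖R k‖² q(x) + V(x) q(x) = E q(x). -/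
/-- The Laplacian of `f : E₂ → ℂ` at `x`: the sum of the second derivatives of `f` along
the standard orthonormal basis of `E₂ = EuclideanSpace ℝ (Fin 2)`. -/
noncomputable def laplacian2 (f : EuclideanSpace ℝ (Fin 2) → ℂ)
    (x : EuclideanSpace ℝ (Fin 2)) : ℂ :=
  ∑ i : Fin 2,
    fderiv ℝ (fun y => fderiv ℝ f y (EuclideanSpace.basisFun (Fin 2) ℝ i)) x
      (EuclideanSpace.basisFun (Fin 2) ℝ i)

open scoped RealInnerProductSpace

/-- The trace of a continuous bilinear map over an orthonormal basis is
basis-independent. -/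
lemma sum_bilin_onb {E : Type*} [NormedAddCommGroup E] [InnerProductSpace ℝ E]
    {ι : Type*} [Fintype ι] (b c : OrthonormalBasis ι ℝ E) (A : E →L[ℝ] E →L[ℝ] ℂ) :
    ∑ i, A (c i) (c i) = ∑ i, A (b i) (b i) := by
  have hrep : ∀ x : E, x = ∑ a, ⟪b a, x⟫ • b a := fun x => (b.sum_repr' x).symm
  have expand : ∀ u v : E,
      A u v = ∑ a, ∑ a', (⟪b a, u⟫ * ⟪b a', v⟫) • A (b a) (b a') := by
    intro u v
    conv_lhs => rw [hrep u, hrep v]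
    rw [map_sum]
    simp only [map_smul, ContinuousLinearMap.coe_sum', Finset.sum_apply,
      ContinuousLinearMap.coe_smul', Pi.smul_apply, map_sum, Finset.smul_sum, smul_smul]
    rw [Finset.sum_comm]
    exact Finset.sum_congr rfl fun a _ => Finset.sum_congr rfl fun a' _ => by rw [mul_comm]
  calc ∑ i, A (c i) (c i)
      = ∑ i, ∑ a, ∑ a', (⟪b a, c i⟫ * ⟪b a', c i⟫) • A (b a) (b a') :=
        Finset.sum_congr rfl fun i _ => expand (c i) (c i)
    _ = ∑ a, ∑ a', ⟪b a, b a'⟫ • A (b a) (b a') := by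
        rw [Finset.sum_comm]
        refine Finset.sum_congr rfl fun a _ => ?_
        rw [Finset.sum_comm]
        refine Finset.sum_congr rfl fun a' _ => ?_
        rw [← Finset.sum_smul]
        congr 1
        have h := c.sum_inner_mul_inner (b a) (b a')
        calc ∑ i, ⟪b a, c i⟫ * ⟪b a', c i⟫
            = ∑ i, ⟪b a, c i⟫ * ⟪c i, b a'⟫ := by
              refine Finset.sum_congr rfl fun i _ => ?_
              rw [real_inner_comm (b a') (c i)]
          _ = ⟪b a, b a'⟫ := h
    _ = ∑ a, A (b a) (b a) := by
        refine Finset.sum_congr rfl fun a _ => ?_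
        rw [Finset.sum_eq_single a]
        · rw [real_inner_self_eq_norm_sq, b.orthonormal.1 a]
          norm_num
        · intro a' _ h
          rw [b.orthonormal.2 (Ne.symm h), zero_smul]
        · intro h; exact absurd (Finset.mem_univ a) h

/-- If the potential `V` is invariant under a linear isometry `R` of the plane and `(E, p)`
is an eigenpair of the twisted Schrödinger operator `H_V(k)`, then `(E, p ∘ R⁻¹)` is an
eigenpair of `H_V(R k)`. -/
theorem rotation_symmetry_twisted_schrodinger
    (R : EuclideanSpace ℝ (Fin 2) ≃ₗᵢ[ℝ] EuclideanSpace ℝ (Fin 2))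
    (V : EuclideanSpace ℝ (Fin 2) → ℝ) (hV : ∀ z, V (R z) = V z)
    (k : EuclideanSpace ℝ (Fin 2)) (E : ℝ)
    (p : EuclideanSpace ℝ (Fin 2) → ℂ) (hp : ContDiff ℝ 2 p)
    (heq : ∀ x, -laplacian2 p x - 2 * Complex.I * (fderiv ℝ p x k)
        + ((‖k‖ : ℝ) ^ 2 : ℂ) * p x + (V x : ℂ) * p x = (E : ℂ) * p x) :
    ∀ x, -laplacian2 (p ∘ R.symm) x
        - 2 * Complex.I * (fderiv ℝ (p ∘ R.symm) x (R k))
        + ((‖R k‖ : ℝ) ^ 2 : ℂ) * (p ∘ R.symm) x + (V x : ℂ) * (p ∘ R.symm) x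
        = (E : ℂ) * (p ∘ R.symm) x := by
  intro x
  set S : EuclideanSpace ℝ (Fin 2) ≃L[ℝ] EuclideanSpace ℝ (Fin 2) :=
    R.symm.toContinuousLinearEquiv with hS
  have hcoe : (p ∘ ⇑R.symm) = (p ∘ ⇑S) := rfl
  have hpd2 : Differentiable ℝ (fderiv ℝ p) :=
    (hp.fderiv_right (m := 1) (by norm_num)).differentiable (by norm_num)
  -- first derivative of the composition
  have hfd : ∀ y : EuclideanSpace ℝ (Fin 2),
      fderiv ℝ (p ∘ ⇑R.symm) y = (fderiv ℝ p (R.symm y)).comp (S : _ →L[ℝ] _) := by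
    intro y
    rw [hcoe, S.comp_right_fderiv]
    rfl
  have h1 : fderiv ℝ (p ∘ ⇑R.symm) x (R k) = fderiv ℝ p (R.symm x) k := by
    rw [hfd]
    simp [hS]
  -- the Laplacian commutes with composition by an isometry
  have hlap : laplacian2 (p ∘ ⇑R.symm) x = laplacian2 p (R.symm x) := by
    set b := EuclideanSpace.basisFun (Fin 2) ℝ with hb
    set A := fderiv ℝ (fderiv ℝ p) (R.symm x) with hA
    have hsecond : ∀ (y : EuclideanSpace ℝ (Fin 2)) (u w : EuclideanSpace ℝ (Fin 2)),
        fderiv ℝ (fun z => fderiv ℝ p z u) y w = fderiv ℝ (fderiv ℝ p) y w u := by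
      intro y u w
      have := fderiv_clm_apply (c := fderiv ℝ p) (u := fun _ => u) (hpd2 y)
        (differentiableAt_const u)
      rw [this]
      simp
    have hterm : ∀ i : Fin 2,
        fderiv ℝ (fun y => fderiv ℝ (p ∘ ⇑R.symm) y (b i)) x (b i)
          = A (R.symm (b i)) (R.symm (b i)) := by
      intro i
      have hfun : (fun y => fderiv ℝ (p ∘ ⇑R.symm) y (b i))
          = (fun z => fderiv ℝ p z (R.symm (b i))) ∘ ⇑S := by
        funext y
        rw [hfd y]
        rfl
      rw [hfun, S.comp_right_fderiv]
      simp only [ContinuousLinearMap.comp_apply]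
      have hSb : (S : _ →L[ℝ] _) (b i) = R.symm (b i) := rfl
      rw [hSb, hsecond]
      rfl
    have hterm2 : ∀ i : Fin 2,
        fderiv ℝ (fun y => fderiv ℝ p y (b i)) (R.symm x) (b i) = A (b i) (b i) := by
      intro i
      rw [hsecond]
    unfold laplacian2
    rw [← hb]
    rw [Finset.sum_congr rfl fun i _ => hterm i, Finset.sum_congr rfl fun i _ => hterm2 i]
    have hmap : ∀ i : Fin 2, R.symm (b i) = (b.map R.symm) i := by
      intro i; rw [b.map_apply]
    rw [Finset.sum_congr rfl fun i _ => by rw [hmap i]]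
    exact sum_bilin_onb b (b.map R.symm) A
  have hnorm : ‖R k‖ = ‖k‖ := R.norm_map k
  have hVx : V x = V (R.symm x) := by
    conv_lhs => rw [← R.apply_symm_apply x]
    exact hV (R.symm x)
  have hpx : (p ∘ ⇑R.symm) x = p (R.symm x) := rfl
  rw [hpx, hlap, h1, hnorm, hVx]
  exact heq (R.symm x)
end
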